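/- arXiv:2412.05924 — 6 statements merged into one kernel-verified Lean document; each statement's English description precedes it below -/
import Mathlib

section
/- Let g(A) = (α₃ + α₄A)(A + β₂)/(bA(1 - η₃A)) for positive constants α₃, α₄, β₂, b, η₃ and A ∈ (0, 1/η₃). Then g is positive on (0, 1/η₃), has a unique minimum point A_m ∈ (0, 1/η₃), is strictly decreasing on (0, A_m) and strictly increasing on (A_m, 1/η₃), and satisfies lim_{A→0⁺} g(A) = lim_{A→(1/η₃)⁻} g(A) = +∞. -/
open Set Filter

/-- properties of g(A) = (α₃+α₄A)(A+β₂)/(bA(1-η₃A)) on (0, 1/η₃):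
positivity, a unique minimum point A_m, strict monotonicity on either side of A_m,
and blow-up at both endpoints. -/
theorem stmt0 (α3 α4 β2 b η3 : ℝ)
    (hα3 : 0 < α3) (hα4 : 0 < α4) (hβ2 : 0 < β2) (hb : 0 < b) (hη3 : 0 < η3)
    (g : ℝ → ℝ)
    (hg : ∀ A, g A = (α3 + α4 * A) * (A + β2) / (b * A * (1 - η3 * A))) :
    (∀ A ∈ Ioo 0 (1 / η3), 0 < g A) ∧
    (∃ Am ∈ Ioo 0 (1 / η3),
      IsMinOn g (Ioo 0 (1 / η3)) Am ∧
      (∀ A' ∈ Ioo 0 (1 / η3), IsMinOn g (Ioo 0 (1 / η3)) A' → A' = Am) ∧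
      StrictAntiOn g (Ioo 0 Am) ∧
      StrictMonoOn g (Ioo Am (1 / η3))) ∧
    Tendsto g (nhdsWithin 0 (Ioi 0)) atTop ∧
    Tendsto g (nhdsWithin (1 / η3) (Iio (1 / η3))) atTop := by
  have hη3' : (0:ℝ) < 1 / η3 := by positivity
  set K : ℝ := α4 + (α3 + α4 * β2) * η3 with hKdef
  set c0 : ℝ := α3 * β2 with hc0def
  have hK : 0 < K := by rw [hKdef]; positivity
  have hc0 : 0 < c0 := by rw [hc0def]; positivity
  obtain ⟨Am, hAmpos, hAmlt, hqAm⟩ :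
      ∃ Am : ℝ, 0 < Am ∧ Am < 1 / η3 ∧ K * Am ^ 2 + 2 * c0 * η3 * Am - c0 = 0 := by
    set s : ℝ := Real.sqrt (c0^2 * η3^2 + K * c0) with hsdef
    have hs2 : s^2 = c0^2 * η3^2 + K * c0 := by
      rw [hsdef]; exact Real.sq_sqrt (by positivity)
    have hs0 : 0 ≤ s := Real.sqrt_nonneg _
    have hsgt : c0 * η3 < s := by nlinarith [mul_pos hK hc0]
    refine ⟨(s - c0 * η3) / K, div_pos (by linarith) hK, ?_, ?_⟩
    · have hslt : η3 * s < K + c0 * η3^2 := by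
        nlinarith [sq_nonneg η3, mul_pos hK hc0, sq_nonneg (K + c0*η3^2)]
      rw [lt_div_iff₀ hη3, div_mul_eq_mul_div, div_lt_one hK]
      nlinarith
    · field_simp
      nlinarith [hs2]
  -- sign of q
  have hqneg : ∀ A : ℝ, 0 < A → A < Am → K * A ^ 2 + 2 * c0 * η3 * A - c0 < 0 := by
    intro A hA hAlt
    nlinarith [mul_pos (sub_pos.2 hAlt) (by nlinarith : (0:ℝ) < K * (Am + A) + 2 * c0 * η3)]
  have hqpos : ∀ A : ℝ, Am < A → 0 < K * A ^ 2 + 2 * c0 * η3 * A - c0 := by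
    intro A hAlt
    nlinarith [mul_pos (sub_pos.2 hAlt) (by nlinarith : (0:ℝ) < K * (Am + A) + 2 * c0 * η3)]
  -- derivative of g
  have hderiv : ∀ A : ℝ, A ≠ 0 → 1 - η3 * A ≠ 0 →
      HasDerivAt g (b * (K * A ^ 2 + 2 * c0 * η3 * A - c0) / (b * A * (1 - η3 * A)) ^ 2) A := by
    intro A hA0 hA1
    have h1 : HasDerivAt (fun A : ℝ => α3 + α4 * A) α4 A := by
      simpa using ((hasDerivAt_id A).const_mul α4).const_add α3
    have h2 : HasDerivAt (fun A : ℝ => A + β2) 1 A := (hasDerivAt_id A).add_const β2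
    have hN := h1.mul h2
    have h3 : HasDerivAt (fun A : ℝ => b * A) b A := by
      simpa using (hasDerivAt_id A).const_mul b
    have h4 : HasDerivAt (fun A : ℝ => 1 - η3 * A) (-η3) A := by
      simpa using ((hasDerivAt_id A).const_mul η3).const_sub 1
    have hD := h3.mul h4
    have hDne : b * A * (1 - η3 * A) ≠ 0 := mul_ne_zero (mul_ne_zero hb.ne' hA0) hA1
    have := hN.div hD hDne
    have hgfun : g = fun A => (α3 + α4 * A) * (A + β2) / (b * A * (1 - η3 * A)) := funext hg
    rw [hgfun]
    refine this.congr_deriv ?_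
    simp only [Pi.mul_apply]
    rw [hKdef, hc0def]
    field_simp
    ring
  have hDpos : ∀ A ∈ Ioo (0:ℝ) (1 / η3), 0 < b * A * (1 - η3 * A) := by
    intro A hA
    have h1 : η3 * A < 1 := by
      have := hA.2; rw [lt_div_iff₀ hη3] at this; linarith
    have : 0 < 1 - η3 * A := by linarith
    exact mul_pos (mul_pos hb hA.1) this
  have hgpos : ∀ A ∈ Ioo (0:ℝ) (1 / η3), 0 < g A := by
    intro A hA
    rw [hg A]
    have hA1 := hA.1
    exact div_pos (mul_pos (by nlinarith) (by nlinarith)) (hDpos A hA)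
  -- strict monotonicity on closed-bordered intervals
  have hanti : StrictAntiOn g (Ioc 0 Am) := by
    apply strictAntiOn_of_deriv_neg (convex_Ioc 0 Am)
    · intro x hx
      have hx1 : (1 : ℝ) - η3 * x ≠ 0 := by
        have : x < 1 / η3 := lt_of_le_of_lt hx.2 hAmlt
        rw [lt_div_iff₀ hη3] at this; nlinarith
      exact (hderiv x hx.1.ne' hx1).continuousAt.continuousWithinAt
    · intro x hx
      rw [interior_Ioc] at hx
      have hxlt : x < 1 / η3 := lt_trans hx.2 hAmlt
      have hx1 : (1 : ℝ) - η3 * x ≠ 0 := by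
        rw [lt_div_iff₀ hη3] at hxlt; nlinarith
      rw [(hderiv x hx.1.ne' hx1).deriv]
      apply div_neg_of_neg_of_pos
      · exact mul_neg_of_pos_of_neg hb (hqneg x hx.1 hx.2)
      · exact pow_pos (hDpos x ⟨hx.1, hxlt⟩) 2
  have hmono : StrictMonoOn g (Ico Am (1 / η3)) := by
    apply strictMonoOn_of_deriv_pos (convex_Ico Am (1 / η3))
    · intro x hx
      have hx0 : (0:ℝ) < x := lt_of_lt_of_le hAmpos hx.1
      have hx1 : (1 : ℝ) - η3 * x ≠ 0 := by
        have := hx.2; rw [lt_div_iff₀ hη3] at this; nlinarith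
      exact (hderiv x hx0.ne' hx1).continuousAt.continuousWithinAt
    · intro x hx
      rw [interior_Ico] at hx
      have hx0 : (0:ℝ) < x := lt_trans hAmpos hx.1
      have hx1 : (1 : ℝ) - η3 * x ≠ 0 := by
        have := hx.2; rw [lt_div_iff₀ hη3] at this; nlinarith
      rw [(hderiv x hx0.ne' hx1).deriv]
      apply div_pos
      · exact mul_pos hb (hqpos x hx.1)
      · exact pow_pos (hDpos x ⟨hx0, hx.2⟩) 2
  have hAmIoo : Am ∈ Ioo (0:ℝ) (1 / η3) := ⟨hAmpos, hAmlt⟩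
  have hmin : IsMinOn g (Ioo 0 (1 / η3)) Am := by
    rw [isMinOn_iff]
    intro x hx
    rcases lt_trichotomy x Am with h | h | h
    · exact (hanti ⟨hx.1, h.le⟩ ⟨hAmpos, le_refl _⟩ h).le
    · rw [h]
    · exact (hmono ⟨le_refl _, hAmlt⟩ ⟨h.le, hx.2⟩ h).le
  refine ⟨hgpos, ⟨Am, hAmIoo, hmin, ?_, hanti.mono Ioo_subset_Ioc_self,
      hmono.mono Ioo_subset_Ico_self⟩, ?_, ?_⟩
  · -- uniqueness
    intro A' hA' hmin'
    by_contra hne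
    have h1 : g A' ≤ g Am := isMinOn_iff.1 hmin' Am hAmIoo
    rcases lt_or_gt_of_ne hne with h | h
    · exact absurd h1 (not_le.2 (hanti ⟨hA'.1, h.le⟩ ⟨hAmpos, le_refl _⟩ h))
    · exact absurd h1 (not_le.2 (hmono ⟨le_refl _, hAmlt⟩ ⟨h.le, hA'.2⟩ h))
  · -- limit at 0+
    have h1 : Tendsto (fun A : ℝ => (α3 + α4 * A) * (A + β2)) (nhdsWithin 0 (Ioi 0))
        (nhds (α3 * β2)) := by
      have h0 : Tendsto (fun A : ℝ => (α3 + α4 * A) * (A + β2)) (nhds 0) (nhds ((α3 + α4 * 0) * (0 + β2))) :=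
        (Continuous.tendsto (by fun_prop) 0)
      have h0' := h0.mono_left (nhdsWithin_le_nhds (s := Ioi (0:ℝ)))
      convert h0' using 2
      ring
    have h2 : Tendsto (fun A : ℝ => b * A * (1 - η3 * A)) (nhdsWithin 0 (Ioi 0))
        (nhdsWithin 0 (Ioi 0)) := by
      rw [tendsto_nhdsWithin_iff]
      constructor
      · have h0 : Tendsto (fun A : ℝ => b * A * (1 - η3 * A)) (nhds 0) (nhds (b * 0 * (1 - η3 * 0))) :=
          Continuous.tendsto (by fun_prop) 0
        have h0' := h0.mono_left (nhdsWithin_le_nhds (s := Ioi (0:ℝ)))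
        convert h0' using 2
        ring
      · filter_upwards [Ioo_mem_nhdsGT_of_mem ⟨le_refl (0:ℝ), hη3'⟩] with x hx
        exact hDpos x hx
    have h3 : Tendsto (fun A : ℝ => (b * A * (1 - η3 * A))⁻¹) (nhdsWithin 0 (Ioi 0)) atTop :=
      tendsto_inv_nhdsGT_zero.comp h2
    have h4 := Tendsto.pos_mul_atTop (by positivity : (0:ℝ) < α3 * β2) h1 h3
    exact h4.congr fun A => by rw [hg A, div_eq_mul_inv]
  · -- limit at (1/η3)-
    have hval : (1:ℝ) - η3 * (1 / η3) = 0 := by field_simp; ring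
    have h1 : Tendsto (fun A : ℝ => (α3 + α4 * A) * (A + β2)) (nhdsWithin (1/η3) (Iio (1/η3)))
        (nhds ((α3 + α4 * (1/η3)) * (1/η3 + β2))) := by
      exact (Continuous.tendsto (by fun_prop) _).mono_left nhdsWithin_le_nhds
    have h2 : Tendsto (fun A : ℝ => b * A * (1 - η3 * A)) (nhdsWithin (1/η3) (Iio (1/η3)))
        (nhdsWithin 0 (Ioi 0)) := by
      rw [tendsto_nhdsWithin_iff]
      constructor
      · have h0 : Tendsto (fun A : ℝ => b * A * (1 - η3 * A)) (nhds (1/η3))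
            (nhds (b * (1/η3) * (1 - η3 * (1/η3)))) := Continuous.tendsto (by fun_prop) _
        have h0' := h0.mono_left (nhdsWithin_le_nhds (s := Iio (1/η3)))
        convert h0' using 2
        rw [hval]; ring
      · filter_upwards [Ioo_mem_nhdsLT_of_mem ⟨hη3', le_refl _⟩] with x hx
        exact hDpos x hx
    have h3 : Tendsto (fun A : ℝ => (b * A * (1 - η3 * A))⁻¹) (nhdsWithin (1/η3) (Iio (1/η3))) atTop :=
      tendsto_inv_nhdsGT_zero.comp h2
    have h4 := Tendsto.pos_mul_atTop (by positivity : (0:ℝ) < (α3 + α4 * (1/η3)) * (1/η3 + β2)) h1 h3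
    exact h4.congr fun A => by rw [hg A, div_eq_mul_inv]
end

section
/- Let g(A) = (α₃ + α₄A)(A + β₂)/(bA(1 - η₃A)) for positive constants α₃, α₄, β₂, b, η₃. Then g is strictly convex on (0, 1/η₃), i.e., g''(A) > 0 for all A ∈ (0, 1/η₃). -/
open Set

/-- g(A) = (α₃+α₄A)(A+β₂)/(bA(1-η₃A)) is strictly convex on (0,1/η₃),
i.e. g''(A) > 0 there. -/
theorem stmt1 (α3 α4 β2 b η3 : ℝ)
    (hα3 : 0 < α3) (hα4 : 0 < α4) (hβ2 : 0 < β2) (hb : 0 < b) (hη3 : 0 < η3)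
    (g : ℝ → ℝ)
    (hg : ∀ A, g A = (α3 + α4 * A) * (A + β2) / (b * A * (1 - η3 * A))) :
    (∀ A ∈ Ioo 0 (1 / η3), 0 < deriv (deriv g) A) ∧
    StrictConvexOn ℝ (Ioo 0 (1 / η3)) g := by
  have hb0 : b ≠ 0 := ne_of_gt hb
  have hη0 : η3 ≠ 0 := ne_of_gt hη3
  set c := α3 * β2 with hc
  set d := α3 + α4 * β2 + α4 / η3 + α3 * β2 * η3 with hd
  have hcpos : 0 < c := mul_pos hα3 hβ2
  have hdpos : 0 < d := by positivity
  set h : ℝ → ℝ := fun A => b⁻¹ * (-(α4 / η3) + c * A⁻¹ + d * (1 - η3 * A)⁻¹) with hh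
  set h1 : ℝ → ℝ := fun A => b⁻¹ * (-(c * (A ^ 2)⁻¹) + d * η3 * ((1 - η3 * A) ^ 2)⁻¹)
    with hh1
  set h2 : ℝ → ℝ := fun A => b⁻¹ * (2 * c * (A ^ 3)⁻¹ + 2 * d * η3 ^ 2 * ((1 - η3 * A) ^ 3)⁻¹)
    with hh2
  -- basic facts for points of the interval
  have key : ∀ A ∈ Ioo 0 (1 / η3), 0 < A ∧ 0 < 1 - η3 * A := by
    intro A hA
    refine ⟨hA.1, ?_⟩
    have : η3 * A < 1 := by
      have := hA.2
      calc η3 * A < η3 * (1 / η3) := by exact (mul_lt_mul_iff_right₀ hη3).2 this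
        _ = 1 := by field_simp
    linarith
  have geq : EqOn g h (Ioo 0 (1 / η3)) := by
    intro A hA
    obtain ⟨hA0, hA1⟩ := key A hA
    rw [hg, hh]
    have hA0' : A ≠ 0 := ne_of_gt hA0
    have hA1' : (1 - η3 * A) ≠ 0 := ne_of_gt hA1
    rw [hd, hc]
    beta_reduce
    generalize hu : 1 - η3 * A = u at hA1' ⊢
    field_simp
    rw [← hu]
    ring
  have hinner : ∀ A : ℝ, HasDerivAt (fun x => 1 - η3 * x) (-η3) A := by
    intro A
    simpa using ((hasDerivAt_id A).const_mul η3).const_sub 1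
  have hd1 : ∀ A ∈ Ioo 0 (1 / η3), HasDerivAt h (h1 A) A := by
    intro A hA
    obtain ⟨hA0, hA1⟩ := key A hA
    have hA0' : A ≠ 0 := ne_of_gt hA0
    have hA1' : (1 - η3 * A) ≠ 0 := ne_of_gt hA1
    have i1 : HasDerivAt (fun x : ℝ => x⁻¹) (-(A ^ 2)⁻¹) A := hasDerivAt_inv hA0'
    have i2 : HasDerivAt (fun x : ℝ => (1 - η3 * x)⁻¹)
        (η3 * ((1 - η3 * A) ^ 2)⁻¹) A := by
      have := (hinner A).inv hA1'
      refine this.congr_deriv ?_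
      rw [neg_neg, div_eq_mul_inv]
    have := (((hasDerivAt_const A (-(α4 / η3))).add (i1.const_mul c)).add
      (i2.const_mul d)).const_mul b⁻¹
    refine this.congr_deriv ?_
    rw [hh1]; ring
  have hd2 : ∀ A ∈ Ioo 0 (1 / η3), HasDerivAt h1 (h2 A) A := by
    intro A hA
    obtain ⟨hA0, hA1⟩ := key A hA
    have hA0' : (A : ℝ) ^ 2 ≠ 0 := pow_ne_zero _ (ne_of_gt hA0)
    have hA1' : (1 - η3 * A) ^ 2 ≠ 0 := pow_ne_zero _ (ne_of_gt hA1)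
    have hsq : HasDerivAt (fun x : ℝ => x ^ 2) (2 * A) A := by
      simpa using hasDerivAt_pow 2 A
    have i1 : HasDerivAt (fun x : ℝ => (x ^ 2)⁻¹)
        (-(2 * A * ((A ^ 2) ^ 2)⁻¹)) A := by
      have := hsq.inv hA0'
      refine this.congr_deriv ?_
      rw [neg_div, div_eq_mul_inv]
    have i2 : HasDerivAt (fun x : ℝ => ((1 - η3 * x) ^ 2)⁻¹)
        (2 * η3 * (1 - η3 * A) * (((1 - η3 * A) ^ 2) ^ 2)⁻¹) A := by
      have hp : HasDerivAt (fun x : ℝ => (1 - η3 * x) ^ 2)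
          (2 * (1 - η3 * A) ^ 1 * (-η3)) A := (hinner A).pow 2
      have := hp.inv hA1'
      refine this.congr_deriv ?_
      rw [div_eq_mul_inv]; ring
    have := (((i1.const_mul c).neg).add (i2.const_mul (d * η3))).const_mul b⁻¹
    refine this.congr_deriv ?_
    rw [hh2]
    field_simp
  have hpos2 : ∀ A ∈ Ioo 0 (1 / η3), 0 < h2 A := by
    intro A hA
    obtain ⟨hA0, hA1⟩ := key A hA
    rw [hh2]
    have t1 : 0 < 2 * c * (A ^ 3)⁻¹ :=
      mul_pos (by positivity) (inv_pos.2 (pow_pos hA0 3))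
    have t2 : 0 < 2 * d * η3 ^ 2 * ((1 - η3 * A) ^ 3)⁻¹ :=
      mul_pos (by positivity) (inv_pos.2 (pow_pos hA1 3))
    exact mul_pos (inv_pos.2 hb) (add_pos t1 t2)
  have hopen : IsOpen (Ioo (0:ℝ) (1 / η3)) := isOpen_Ioo
  have hderiv2 : ∀ A ∈ Ioo 0 (1 / η3), deriv (deriv g) A = h2 A := by
    intro A hA
    have hmem : Ioo (0:ℝ) (1 / η3) ∈ nhds A := hopen.mem_nhds hA
    have ev1 : g =ᶠ[nhds A] h := Filter.eventuallyEq_of_mem hmem geq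
    have ev2 : deriv g =ᶠ[nhds A] deriv h := ev1.deriv
    have ev3 : deriv h =ᶠ[nhds A] h1 :=
      Filter.eventuallyEq_of_mem hmem fun x hx => (hd1 x hx).deriv
    have : deriv (deriv g) A = deriv h1 A := by
      rw [ev2.deriv_eq, ev3.deriv_eq]
    rw [this, (hd2 A hA).deriv]
  constructor
  · intro A hA
    rw [hderiv2 A hA]
    exact hpos2 A hA
  · apply strictConvexOn_of_deriv2_pos (convex_Ioo _ _)
    · exact (HasDerivAt.continuousOn hd1).congr geq
    · intro A hA
      rw [interior_Ioo] at hA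
      have : deriv^[2] g A = deriv (deriv g) A := by
        simp [Function.iterate_succ, Function.iterate_zero]
      rw [this, hderiv2 A hA]
      exact hpos2 A hA
end

section
/- The minimum over A ∈ (0, 1/η₃) of g(A) = (α₃ + α₄A)(A + β₂)/(bA(1 − η₃A)) is attained at A_m = (α₃β₂/(√(α₃β₂(α₃ + α₄/η₃)(β₂ + 1/η₃)) + α₃β₂))·(1/η₃), and equals g_m = (2√(α₃β₂(α₃η₃ + α₄)(β₂η₃ + 1)) + β₂(2α₃η₃ + α₄) + α₃)/b. -/
open Set

set_option maxHeartbeats 1000000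

/-- the minimum of g on (0,1/η₃) is attained at the explicit point A_m
and equals the explicit value g_m. -/
theorem stmt4 (α3 α4 β2 b η3 : ℝ)
    (hα3 : 0 < α3) (hα4 : 0 < α4) (hβ2 : 0 < β2) (hb : 0 < b) (hη3 : 0 < η3)
    (g : ℝ → ℝ)
    (hg : ∀ A, g A = (α3 + α4 * A) * (A + β2) / (b * A * (1 - η3 * A)))
    (Am gm : ℝ)
    (hAm : Am = (α3 * β2 /
      (Real.sqrt (α3 * β2 * (α3 + α4 / η3) * (β2 + 1 / η3)) + α3 * β2)) * (1 / η3))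
    (hgm : gm = (2 * Real.sqrt (α3 * β2 * (α3 * η3 + α4) * (β2 * η3 + 1))
      + β2 * (2 * α3 * η3 + α4) + α3) / b) :
    Am ∈ Ioo 0 (1 / η3) ∧ IsMinOn g (Ioo 0 (1 / η3)) Am ∧ g Am = gm := by
  set s := Real.sqrt (α3 * β2 * (α3 + α4 / η3) * (β2 + 1 / η3)) with hsdef
  have hspos : 0 < s := Real.sqrt_pos.mpr (by positivity)
  have hs2 : η3 ^ 2 * s ^ 2 = α3 * β2 * (α3 * η3 + α4) * (β2 * η3 + 1) := by
    have h := Real.sq_sqrt (show (0:ℝ) ≤ α3 * β2 * (α3 + α4 / η3) * (β2 + 1 / η3) by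
      positivity)
    rw [← hsdef] at h
    rw [h]
    field_simp
  -- rewrite the sqrt in gm
  have hsq : Real.sqrt (α3 * β2 * (α3 * η3 + α4) * (β2 * η3 + 1)) = η3 * s := by
    have h1 : α3 * β2 * (α3 * η3 + α4) * (β2 * η3 + 1) = (η3 * s) ^ 2 := by
      rw [mul_pow]; linarith
    rw [h1, Real.sqrt_sq (by positivity)]
  set c : ℝ := 2 * η3 * s + β2 * (2 * α3 * η3 + α4) + α3 with hcdef
  have hgm' : gm = c / b := by rw [hgm, hsq, hcdef]; ring
  have hcpos : 0 < c := by positivity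
  have hAm' : Am = α3 * β2 / (η3 * (s + α3 * β2)) := by
    rw [hAm]; field_simp
  have hAmpos : 0 < Am := by rw [hAm']; positivity
  have hAmlt : Am < 1 / η3 := by
    rw [hAm', div_lt_div_iff₀ (by positivity) hη3]
    nlinarith
  -- key polynomial identity
  have key : ∀ A : ℝ, α3 * β2 * ((α3 + α4 * A) * (A + β2) - c * (A * (1 - η3 * A)))
      = (η3 * (s + α3 * β2) * A - α3 * β2) ^ 2 := by
    intro A
    rw [hcdef]
    linear_combination (-(A ^ 2)) * hs2
  have hmem : Am ∈ Ioo 0 (1 / η3) := ⟨hAmpos, hAmlt⟩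
  have hzero : η3 * (s + α3 * β2) * Am - α3 * β2 = 0 := by
    rw [hAm']; field_simp; ring
  have hgAm : g Am = gm := by
    have hk := key Am
    rw [hzero] at hk
    have h1 : (α3 + α4 * Am) * (Am + β2) = c * (Am * (1 - η3 * Am)) := by
      have : α3 * β2 * ((α3 + α4 * Am) * (Am + β2) - c * (Am * (1 - η3 * Am))) = 0 := by
        rw [hk]; ring
      have h2 : (α3 + α4 * Am) * (Am + β2) - c * (Am * (1 - η3 * Am)) = 0 := by
        have := mul_pos hα3 hβ2
        nlinarith
      linarith
    have h3 : 0 < 1 - η3 * Am := by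
      have := hAmlt
      rw [lt_div_iff₀ hη3] at this
      linarith
    have hd : 0 < Am * (1 - η3 * Am) := mul_pos hAmpos h3
    rw [hg Am, h1, hgm']
    rw [div_eq_div_iff (mul_pos (mul_pos hb hAmpos) h3).ne' hb.ne']
    ring
  refine ⟨hmem, ?_, hgAm⟩
  intro A hA
  simp only [mem_setOf_eq]
  obtain ⟨hA0, hA1⟩ := hA
  have hd : 0 < A * (1 - η3 * A) := by
    have h3 : 0 < 1 - η3 * A := by rw [lt_div_iff₀ hη3] at hA1; linarith
    positivity
  have hk := key A
  have h6 : 0 ≤ α3 * β2 * ((α3 + α4 * A) * (A + β2) - c * (A * (1 - η3 * A))) := by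
    rw [hk]; exact sq_nonneg _
  have hineq : c * (A * (1 - η3 * A)) ≤ (α3 + α4 * A) * (A + β2) := by
    have h7 : 0 ≤ (α3 + α4 * A) * (A + β2) - c * (A * (1 - η3 * A)) := by
      by_contra hcon
      push_neg at hcon
      nlinarith [mul_pos hα3 hβ2]
    linarith
  rw [hgAm, hg A, hgm']
  rw [div_le_div_iff₀ hb (by rw [mul_assoc]; exact mul_pos hb hd)]
  have h5 := mul_le_mul_of_nonneg_left hineq hb.le
  nlinarith [h5]
end

section
/- With positive constants α₃, α₄, β₂, η₃, b, λ₀, c, η₁, η₂, set σ = c(η₁ + η₂) and P₃(A) = α₄σA³ + (α₄ + bη₃λ₀ + α₃σ)A² + (α₄β₂ + α₃ − bλ₀)A + α₃β₂. Then P₃(ω/η₃) > 0 for every ω > 1; in particular no root of P₃ lies in (1/η₃, ∞). -/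
/-! Writing `A² · b λ₀ η₃ - b λ₀ A = b λ₀ A (η₃ A - 1)`, the cubic becomes a sum of terms with
nonnegative coefficients plus `b λ₀ A (η₃ A - 1)`, which is nonnegative as soon as `η₃ A ≥ 1`;
the constant term `α₃ β₂ > 0` makes the sum strictly positive. -/

theorem cubic_pos_of_one_le_mul {α3 α4 β2 η3 b lam0 σ A : ℝ}
    (hα3 : 0 < α3) (hα4 : 0 ≤ α4) (hβ2 : 0 < β2) (hb : 0 ≤ b) (hlam0 : 0 ≤ lam0)
    (hσ : 0 ≤ σ) (hA : 0 ≤ A) (hηA : 1 ≤ η3 * A) :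
    0 < α4 * σ * A ^ 3 + (α4 + b * η3 * lam0 + α3 * σ) * A ^ 2
      + (α4 * β2 + α3 - b * lam0) * A + α3 * β2 := by
  have hsplit : α4 * σ * A ^ 3 + (α4 + b * η3 * lam0 + α3 * σ) * A ^ 2
      + (α4 * β2 + α3 - b * lam0) * A + α3 * β2
      = (α4 * σ * A ^ 3 + (α4 + α3 * σ) * A ^ 2 + (α4 * β2 + α3) * A + α3 * β2)
        + b * lam0 * A * (η3 * A - 1) := by ring
  rw [hsplit]
  exact add_pos_of_pos_of_nonneg (by positivity)
    (mul_nonneg (by positivity) (sub_nonneg.mpr hηA))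

/-- P₃(ω/η₃) > 0 for every ω > 1, so no root of P₃ lies in (1/η₃, ∞). -/
theorem stmt9 (α3 α4 β2 η3 b lam0 c η1 η2 : ℝ)
    (hα3 : 0 < α3) (hα4 : 0 < α4) (hβ2 : 0 < β2) (hη3 : 0 < η3)
    (hb : 0 < b) (hlam0 : 0 < lam0) (hc : 0 < c) (hη1 : 0 < η1) (hη2 : 0 < η2)
    (σ : ℝ) (hσ : σ = c * (η1 + η2))
    (P3 : ℝ → ℝ)
    (hP3 : ∀ A, P3 A = α4 * σ * A ^ 3 + (α4 + b * η3 * lam0 + α3 * σ) * A ^ 2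
      + (α4 * β2 + α3 - b * lam0) * A + α3 * β2) :
    (∀ ω : ℝ, 1 < ω → 0 < P3 (ω / η3)) ∧
    (∀ A : ℝ, 1 / η3 < A → P3 A ≠ 0) := by
  have hσ0 : 0 ≤ σ := by rw [hσ]; positivity
  have hpos : ∀ A, 0 ≤ A → 1 ≤ η3 * A → 0 < P3 A := fun A hA hηA => by
    rw [hP3]
    exact cubic_pos_of_one_le_mul hα3 hα4.le hβ2 hb.le hlam0.le hσ0 hA hηA
  refine ⟨fun ω hω => hpos _ (by positivity) ?_, fun A hA => (hpos A ?_ ?_).ne'⟩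
  · rw [mul_div_cancel₀ ω hη3.ne']
    exact hω.le
  · exact (one_div_pos.mpr hη3).le.trans hA.le
  · exact ((div_lt_iff₀' hη3).mp hA).le
end

section
/- Consider the cubic P₃(ζ) = ζ³ + p₂ζ² + p₁ζ + p₀ with p₀ = ρ₁(β₃ − δ₁ − δ₂), p₁ = β₃(ρ₁ + 1) + ρ₁, p₂ = β₃ + ρ₁ + 1, where ρ₁, β₃, δ₁, δ₂ > 0 and δ₁ + δ₂ < β₃. Then p₁p₂ − p₀ = β₃²(ρ₁+1) + β₃(ρ₁+1)² + ρ₁(δ₁ + δ₂ + ρ₁ + 1) > 0 and all coefficients are positive, so by the Routh–Hurwitz criterion every root of P₃ has negative real part. -/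
/-! A real root `x ≥ 0` is impossible since every term of `P x` is nonnegative and `p₀ > 0`.
For a root `x + iy` with `y ≠ 0`, the imaginary part of `P (x + iy) = 0` gives
`y² = 3x² + 2p₂x + p₁`; substituting this into the real part leaves
`8x³ + 8p₂x² + 2(p₁ + p₂²)x + (p₁p₂ - p₀) = 0`, impossible for `x ≥ 0` once `p₁p₂ > p₀`. -/

namespace Complex

theorem re_neg_of_cubic_eq_zero {p₀ p₁ p₂ : ℝ} (h₀ : 0 < p₀) (h₁ : 0 < p₁) (h₂ : 0 < p₂)
    (hrh : p₀ < p₁ * p₂) {ζ : ℂ} (hζ : ζ ^ 3 + p₂ * ζ ^ 2 + p₁ * ζ + p₀ = 0) :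
    ζ.re < 0 := by
  set x := ζ.re
  set y := ζ.im
  have hre : x ^ 3 - 3 * x * y ^ 2 + p₂ * (x ^ 2 - y ^ 2) + p₁ * x + p₀ = 0 := by
    have := congrArg re hζ
    simp only [pow_succ, pow_zero, one_mul, add_re, mul_re, mul_im, ofReal_re, ofReal_im,
      zero_re] at this
    linear_combination this
  have him : y * (3 * x ^ 2 - y ^ 2 + 2 * p₂ * x + p₁) = 0 := by
    have := congrArg im hζ
    simp only [pow_succ, pow_zero, one_mul, add_im, mul_re, mul_im, ofReal_re, ofReal_im,
      zero_im] at this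
    linear_combination this
  by_contra! hx
  rcases mul_eq_zero.1 him with hy | hy
  · rw [hy] at hre
    have : 0 < x ^ 3 + p₂ * x ^ 2 + p₁ * x + p₀ := by positivity
    linarith
  · have key : 8 * x ^ 3 + 8 * p₂ * x ^ 2 + 2 * (p₁ + p₂ ^ 2) * x + (p₁ * p₂ - p₀) = 0 := by
      linear_combination (3 * x + p₂) * hy - hre
    have : 0 < 8 * x ^ 3 + 8 * p₂ * x ^ 2 + 2 * (p₁ + p₂ ^ 2) * x + (p₁ * p₂ - p₀) :=
      add_pos_of_nonneg_of_pos (by positivity) (sub_pos.2 hrh)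
    linarith

end Complex

/-- the cubic ζ³ + p₂ζ² + p₁ζ + p₀ with the stated coefficients
satisfies the Routh–Hurwitz conditions, so all (complex) roots have negative
real part. -/
theorem stmt12 (ρ1 β3 δ1 δ2 : ℝ)
    (hρ1 : 0 < ρ1) (hβ3 : 0 < β3) (hδ1 : 0 < δ1) (hδ2 : 0 < δ2)
    (hδ : δ1 + δ2 < β3)
    (p0 p1 p2 : ℝ)
    (hp0 : p0 = ρ1 * (β3 - δ1 - δ2))
    (hp1 : p1 = β3 * (ρ1 + 1) + ρ1)
    (hp2 : p2 = β3 + ρ1 + 1) :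
    p1 * p2 - p0 = β3 ^ 2 * (ρ1 + 1) + β3 * (ρ1 + 1) ^ 2 + ρ1 * (δ1 + δ2 + ρ1 + 1) ∧
    0 < p0 ∧ 0 < p1 ∧ 0 < p2 ∧
    (∀ ζ : ℂ, ζ ^ 3 + (p2 : ℂ) * ζ ^ 2 + (p1 : ℂ) * ζ + (p0 : ℂ) = 0 → ζ.re < 0) := by
  have hgap : p1 * p2 - p0 = β3 ^ 2 * (ρ1 + 1) + β3 * (ρ1 + 1) ^ 2 + ρ1 * (δ1 + δ2 + ρ1 + 1) := by
    subst hp0 hp1 hp2; ring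
  have h0 : 0 < p0 := hp0 ▸ mul_pos hρ1 (by linarith)
  have h1 : 0 < p1 := by rw [hp1]; positivity
  have h2 : 0 < p2 := by rw [hp2]; positivity
  have hrh : p0 < p1 * p2 := sub_pos.1 (hgap ▸ by positivity)
  exact ⟨hgap, h0, h1, h2, fun ζ hζ => Complex.re_neg_of_cubic_eq_zero h0 h1 h2 hrh hζ⟩
end

section
/- Let h(A) = (α₁/(β₃ − δ₁))·λ(η₁LA/(β₃ − δ₁))·(1 − A) − (α₃ + α₄A) for A ∈ [0, 1], where λ : [0, ∞) → [0, ∞) is continuous and strictly decreasing, and α₁, α₃, α₄, β₃, δ₁, η₁, L > 0 with δ₁ < β₃. Then h is strictly decreasing on [0, 1], h(1) < 0, h(0) = α₃(Ĥ − 1) where Ĥ = α₁λ(0)/(α₃(β₃ − δ₁)), and the equation h(A) = 0 has a solution in (0,1) if and only if Ĥ > 1, in which case the solution is unique. -/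
open Set

/-- h is strictly decreasing on [0,1], h(1) < 0, h(0) = α₃(Hhat−1),
and h(A) = 0 has a solution in (0,1) iff Hhat > 1, which is then unique. -/
theorem stmt14 (α1 α3 α4 β3 δ1 η1 L : ℝ)
    (hα1 : 0 < α1) (hα3 : 0 < α3) (hα4 : 0 < α4) (hβ3 : 0 < β3)
    (hδ1 : 0 < δ1) (hη1 : 0 < η1) (hL : 0 < L) (hδβ : δ1 < β3)
    (lam : ℝ → ℝ)
    (hcont : ContinuousOn lam (Ici 0))
    (hnonneg : ∀ x : ℝ, 0 ≤ x → 0 ≤ lam x)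
    (hanti : StrictAntiOn lam (Ici 0))
    (h : ℝ → ℝ)
    (hh : ∀ A, h A = α1 / (β3 - δ1) * lam (η1 * L * A / (β3 - δ1)) * (1 - A)
      - (α3 + α4 * A))
    (Hhat : ℝ) (hHhat : Hhat = α1 * lam 0 / (α3 * (β3 - δ1))) :
    StrictAntiOn h (Icc 0 1) ∧
    h 1 < 0 ∧
    h 0 = α3 * (Hhat - 1) ∧
    ((∃ A ∈ Ioo (0 : ℝ) 1, h A = 0) ↔ 1 < Hhat) ∧
    (∀ A ∈ Ioo (0 : ℝ) 1, ∀ A' ∈ Ioo (0 : ℝ) 1, h A = 0 → h A' = 0 → A = A') := by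
  have hc : (0:ℝ) < β3 - δ1 := by linarith
  have hk : (0:ℝ) < η1 * L / (β3 - δ1) := by positivity
  -- strict anti
  have hanti' : StrictAntiOn h (Icc 0 1) := by
    intro A hA B hB hAB
    rw [hh A, hh B]
    have hA0 : 0 ≤ A := hA.1
    have hB1 : B ≤ 1 := hB.2
    have hmemA : η1 * L * A / (β3 - δ1) ∈ Ici (0:ℝ) := by
      simp only [mem_Ici]; positivity
    have hmemB : η1 * L * B / (β3 - δ1) ∈ Ici (0:ℝ) := by
      have : (0:ℝ) ≤ B := le_trans hA0 hAB.le
      simp only [mem_Ici]; positivity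
    have hlt : η1 * L * A / (β3 - δ1) < η1 * L * B / (β3 - δ1) := by
      gcongr
    have hlam : lam (η1 * L * B / (β3 - δ1)) < lam (η1 * L * A / (β3 - δ1)) :=
      hanti hmemA hmemB hlt
    have hlamB0 : 0 ≤ lam (η1 * L * B / (β3 - δ1)) := hnonneg _ hmemB
    have hprod : lam (η1 * L * B / (β3 - δ1)) * (1 - B)
        ≤ lam (η1 * L * A / (β3 - δ1)) * (1 - A) := by
      apply mul_le_mul hlam.le (by linarith) (by linarith)
      exact le_trans hlamB0 hlam.le
    have hpos : 0 < α1 / (β3 - δ1) := by positivity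
    nlinarith [mul_le_mul_of_nonneg_left hprod hpos.le]
  refine ⟨hanti', ?_, ?_, ?_, ?_⟩
  · rw [hh 1]
    have := hnonneg (η1 * L * 1 / (β3 - δ1)) (by positivity)
    nlinarith
  · rw [hh 0, hHhat]
    field_simp
    ring
  · have h0 : h 0 = α3 * (Hhat - 1) := by
      rw [hh 0, hHhat]; field_simp; ring
    have h1 : h 1 < 0 := by
      rw [hh 1]
      have := hnonneg (η1 * L * 1 / (β3 - δ1)) (by positivity)
      nlinarith
    constructor
    · rintro ⟨A, hA, hA0⟩
      have : h A < h 0 := hanti' ⟨le_refl 0, zero_le_one⟩ ⟨hA.1.le, hA.2.le⟩ hA.1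
      rw [hA0, h0] at this
      nlinarith
    · intro hH
      have hcH : ContinuousOn h (Icc 0 1) := by
        have heq : EqOn h (fun A => α1 / (β3 - δ1) * lam (η1 * L * A / (β3 - δ1)) * (1 - A)
            - (α3 + α4 * A)) (Icc 0 1) := fun A _ => hh A
        apply ContinuousOn.congr _ heq
        apply ContinuousOn.sub
        · apply ContinuousOn.mul
          apply ContinuousOn.mul continuousOn_const
          · apply hcont.comp ((continuous_const.mul continuous_id').div_const _).continuousOn
            intro A hA
            simp only [mem_Ici]
            have := hA.1
            exact div_nonneg (mul_nonneg (mul_nonneg hη1.le hL.le) this) hc.le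
          · exact (continuous_const.sub continuous_id').continuousOn
        · exact (continuous_const.add (continuous_const.mul continuous_id')).continuousOn
      have h0pos : 0 < h 0 := by rw [h0]; nlinarith
      have : (0:ℝ) ∈ Ioo (h 1) (h 0) := ⟨h1, h0pos⟩
      obtain ⟨A, hA, hAv⟩ := intermediate_value_Ioo' zero_le_one hcH this
      exact ⟨A, hA, hAv⟩
  · intro A hA A' hA' hA0 hA'0
    have hmem : A ∈ Icc (0:ℝ) 1 := ⟨hA.1.le, hA.2.le⟩
    have hmem' : A' ∈ Icc (0:ℝ) 1 := ⟨hA'.1.le, hA'.2.le⟩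
    rcases lt_trichotomy A A' with hlt | heq | hgt
    · have := hanti' hmem hmem' hlt; rw [hA0, hA'0] at this; linarith
    · exact heq
    · have := hanti' hmem' hmem hgt; rw [hA0, hA'0] at this; linarith
end
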